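/- Consequently, under the hypotheses of the previous statement, every finite path π in G satisfies: the word f obtained by concatenating the labels along π has ⟨x, φ(f)⟩ ≤ N·h·max_i x_i. In particular, weighted balances of infixes read along runs are uniformly bounded by a constant depending only on G, h, and x. -/

import Mathlib

/-- The alphabet Σ_n: letter `(i, true)` is `a_i`, `(i, false)` is `ā_i`. -/
abbrev Alph (n : ℕ) := Fin n × Bool

abbrev Word (n : ℕ) := List (Alph n)

/-- The balance function φ_i(w) = |w|_{a_i} - |w|_{ā_i}. -/
def phi {n : ℕ} (w : Word n) (i : Fin n) : ℤ :=
  (w.count (i, true) : ℤ) - (w.count (i, false) : ℤ)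

/-- The prefix of length k of an infinite word. -/
def pre {A : Type*} (w : ℕ → A) (k : ℕ) : List A := (List.range k).map w

/-- The (finite) infix w[p..q) of an infinite word. -/
def seg {A : Type*} (w : ℕ → A) (p q : ℕ) : List A :=
  (List.range (q - p)).map (fun j => w (p + j))

/-- The weighted balance ⟨x, φ(w)⟩. -/
def wbal {n : ℕ} (x : Fin n → ℕ) (w : Word n) : ℤ :=
  ∑ i, (x i : ℤ) * phi w i

/-- The basic separator P_{i,k}: words with a prefix u of negative i-balance all of whose
prefixes have i-balance at most k. -/
def Pset {n : ℕ} (i : Fin n) (k : ℤ) : Set (ℕ → Alph n) :=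
  {w | ∃ m : ℕ, phi (pre w m) i < 0 ∧ ∀ j ≤ m, phi (pre w j) i ≤ k}

/-- The basic separator S_{x,k}: words decomposing as u v₁ v₂ ⋯ such that every infix of
v₁ v₂ ⋯ has x-weighted balance at most k and each v_ℓ has negative x-weighted balance. -/
def Sset {n : ℕ} (x : Fin n → ℕ) (k : ℤ) : Set (ℕ → Alph n) :=
  {w | ∃ (u : Word n) (v : ℕ → Word n),
    (∀ ℓ, v ℓ ≠ []) ∧
    (∀ m : ℕ, pre w (u ++ ((List.range m).map v).flatten).length
        = u ++ ((List.range m).map v).flatten) ∧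
    (∀ p q : ℕ, u.length ≤ p → p ≤ q → wbal x (seg w p q) ≤ k) ∧
    (∀ ℓ, wbal x (v ℓ) < 0)}

/-- A list of edges forms a walk: consecutive edges are compatible. -/
def IsWalk {V E : Type*} (src tgt : E → V) (es : List E) : Prop :=
  es.Chain' (fun e f => tgt e = src f)

/-- A closed walk: a nonempty walk that ends where it starts. -/
def IsClosedWalk {V E : Type*} (src tgt : E → V) (es : List E) : Prop :=
  IsWalk src tgt es ∧ es ≠ [] ∧
    ∀ h : es ≠ [], tgt (es.getLast h) = src (es.head h)

/-- A primitive (simple) cycle: a closed walk visiting no vertex twice except start/end. -/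
def IsPrimitiveCycle {V E : Type*} (src tgt : E → V) (es : List E) : Prop :=
  IsClosedWalk src tgt es ∧ (es.map src).Nodup

/-- The total weight of a walk. -/
def walkWeight {E : Type*} (c : E → ℤ) (es : List E) : ℤ := (es.map c).sum

/-! A walk that visits a vertex twice splits as `a ++ (e :: b) ++ (e' :: c)` with `e :: b` a
closed walk; cutting out that cycle leaves a shorter walk (closed if the original was). By
induction on length, every closed walk has nonpositive weight, being made of primitive cycles,
and every walk weighs at most a walk without repeated vertices, which has at most `card V` edges,
each of weight at most `h · max x` since a letter changes `⟨x, φ⟩` by at most `max x`. -/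

section Balance

variable {n : ℕ}

lemma phi_append (u v : Word n) (i : Fin n) : phi (u ++ v) i = phi u i + phi v i := by
  simp only [phi, List.count_append]
  push_cast
  ring

lemma wbal_append (x : Fin n → ℕ) (u v : Word n) : wbal x (u ++ v) = wbal x u + wbal x v := by
  simp only [wbal, phi_append, mul_add, Finset.sum_add_distrib]

lemma phi_singleton_le (a : Alph n) (i : Fin n) : phi [a] i ≤ if i = a.1 then 1 else 0 := by
  obtain ⟨j, b⟩ := a
  by_cases hij : i = j
  · cases b <;> simp [phi, hij]
  · cases b <;> simp [phi, hij, Ne.symm hij]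

lemma wbal_singleton_le (x : Fin n → ℕ) (a : Alph n) : wbal x [a] ≤ x a.1 := by
  calc wbal x [a] ≤ ∑ i, (x i : ℤ) * if i = a.1 then 1 else 0 :=
        Finset.sum_le_sum fun i _ =>
          mul_le_mul_of_nonneg_left (phi_singleton_le a i) (by positivity)
    _ = x a.1 := by simp

lemma wbal_le_length_mul_sup (x : Fin n → ℕ) (w : Word n) :
    wbal x w ≤ w.length * (Finset.univ.sup x : ℕ) := by
  induction w with
  | nil => simp [wbal, phi]
  | cons a w ih =>
    have hx : x a.1 ≤ Finset.univ.sup x := Finset.le_sup (Finset.mem_univ _)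
    rw [← List.singleton_append, wbal_append, List.length_append, List.length_singleton]
    push_cast
    linarith [wbal_singleton_le x a, (Int.ofNat_le.mpr hx : (x a.1 : ℤ) ≤ _)]

lemma wbal_flatten_map {E : Type*} (x : Fin n → ℕ) (lab : E → Word n) (es : List E) :
    wbal x (es.map lab).flatten = walkWeight (fun e => wbal x (lab e)) es := by
  induction es with
  | nil => simp [wbal, phi, walkWeight]
  | cons e es ih => simp_all [wbal_append, walkWeight]

end Balance

lemma List.exists_eq_append_cons_append_cons_of_not_nodup_map {α β : Type*} {f : α → β}
    {l : List α} (hl : ¬ (l.map f).Nodup) :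
    ∃ a e b e' c, l = a ++ e :: b ++ e' :: c ∧ f e = f e' := by
  induction l with
  | nil => simp at hl
  | cons e l ih =>
    rw [List.map_cons, List.nodup_cons, not_and_or, not_not] at hl
    rcases hl with hmem | hl
    · obtain ⟨e', he', hfe⟩ := List.mem_map.mp hmem
      obtain ⟨b, c, rfl⟩ := List.append_of_mem he'
      exact ⟨[], e, b, e', c, rfl, hfe.symm⟩
    · obtain ⟨a, e₁, b, e₂, c, rfl, hf⟩ := ih hl
      exact ⟨e :: a, e₁, b, e₂, c, rfl, hf⟩

section Walks

variable {V E : Type*} {src tgt : E → V}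

lemma IsWalk.isClosedWalk_of_src_eq {a b c : List E} {e e' : E}
    (hw : IsWalk src tgt (a ++ e :: b ++ e' :: c)) (he : src e = src e') :
    IsClosedWalk src tgt (e :: b) := by
  have hb : IsWalk src tgt (e :: b ++ [e']) := List.IsChain.infix hw ⟨a, c, by simp⟩
  refine ⟨hb.left_of_append, List.cons_ne_nil _ _, fun hne => ?_⟩
  simpa [he] using hb.rel_getLast_head_of_append hne (List.cons_ne_nil _ _)

lemma IsWalk.remove_cycle {a b c : List E} {e e' : E}
    (hw : IsWalk src tgt (a ++ e :: b ++ e' :: c)) (he : src e = src e') :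
    IsWalk src tgt (a ++ e' :: c) := by
  have ha : IsWalk src tgt (a ++ [e]) := List.IsChain.infix hw ⟨[], b ++ e' :: c, by simp⟩
  have hc : IsWalk src tgt (e' :: c) := List.IsChain.infix hw ⟨a ++ e :: b, [], by simp⟩
  have hlink := (List.isChain_append.mp ha).2.2
  exact List.IsChain.append ha.left_of_append hc (by simpa [he] using hlink)

lemma IsClosedWalk.remove_cycle {a b c : List E} {e e' : E}
    (hw : IsClosedWalk src tgt (a ++ e :: b ++ e' :: c)) (he : src e = src e') :
    IsClosedWalk src tgt (a ++ e' :: c) := by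
  refine ⟨hw.1.remove_cycle he, by simp, fun hne => ?_⟩
  have hclose := hw.2.2 (by simp)
  cases a <;> simp_all

variable {c : E → ℤ}

lemma walkWeight_le_length_mul {B : ℤ} (hc : ∀ e, c e ≤ B) (es : List E) :
    walkWeight c es ≤ es.length * B := by
  simpa [walkWeight] using List.sum_le_card_nsmul (es.map c) B (by simpa using fun e _ => hc e)

lemma walkWeight_append_cons_append_cons (a b d : List E) (e e' : E) :
    walkWeight c (a ++ e :: b ++ e' :: d) =
      walkWeight c (e :: b) + walkWeight c (a ++ e' :: d) := by
  simp only [walkWeight, List.map_append, List.map_cons, List.sum_append, List.sum_cons]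
  ring

theorem IsClosedWalk.walkWeight_nonpos
    (hprim : ∀ es, IsPrimitiveCycle src tgt es → walkWeight c es ≤ 0) {es : List E}
    (hes : IsClosedWalk src tgt es) :
    walkWeight c es ≤ 0 := by
  by_cases hnd : (es.map src).Nodup
  · exact hprim es ⟨hes, hnd⟩
  obtain ⟨a, e, b, e', d, hsplit, he⟩ :=
    List.exists_eq_append_cons_append_cons_of_not_nodup_map hnd
  rw [hsplit] at hes ⊢
  have hcycle := (hes.1.isClosedWalk_of_src_eq he).walkWeight_nonpos hprim
  have hrest := (hes.remove_cycle he).walkWeight_nonpos hprim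
  rw [walkWeight_append_cons_append_cons]
  linarith
termination_by es.length
decreasing_by all_goals simp only [hsplit, List.length_append, List.length_cons]; omega

theorem IsWalk.walkWeight_le_card_mul [Fintype V]
    (hprim : ∀ es, IsPrimitiveCycle src tgt es → walkWeight c es ≤ 0) {B : ℤ}
    (hc : ∀ e, c e ≤ B) (hB : 0 ≤ B) {es : List E} (hes : IsWalk src tgt es) :
    walkWeight c es ≤ Fintype.card V * B := by
  by_cases hnd : (es.map src).Nodup
  · have hlen : (es.length : ℤ) ≤ Fintype.card V := by
      exact_mod_cast es.length_map src ▸ hnd.length_le_card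
    nlinarith [walkWeight_le_length_mul hc es]
  obtain ⟨a, e, b, e', d, hsplit, he⟩ :=
    List.exists_eq_append_cons_append_cons_of_not_nodup_map hnd
  rw [hsplit] at hes ⊢
  have hcycle := (hes.isClosedWalk_of_src_eq he).walkWeight_nonpos hprim
  have hrest := (hes.remove_cycle he).walkWeight_le_card_mul hprim hc hB
  rw [walkWeight_append_cons_append_cons]
  linarith
termination_by es.length
decreasing_by simp only [hsplit, List.length_append, List.length_cons]; omega

end Walks

/-- Uniform bound on weighted balances along runs: in a finite labeled graph (labels of
length ≤ h) whose primitive cycles all have nonpositive x-weighted label balance, the word f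
read along any finite path π satisfies ⟨x, φ(f)⟩ ≤ N·h·(max_i x_i), where N = card V. -/
theorem wbal_path_bound {n : ℕ} {V E : Type*} [Fintype V]
    (src tgt : E → V) (lab : E → Word n) (x : Fin n → ℕ) (h : ℕ)
    (hlab : ∀ e : E, (lab e).length ≤ h)
    (hprim : ∀ es : List E, IsPrimitiveCycle src tgt es →
      wbal x ((es.map lab).flatten) ≤ 0)
    (π : List E) (hπ : IsWalk src tgt π) :
    wbal x ((π.map lab).flatten)
      ≤ ((Fintype.card V * h * Finset.univ.sup x : ℕ) : ℤ) := by
  have hedge (e : E) : wbal x (lab e) ≤ h * (Finset.univ.sup x : ℕ) :=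
    (wbal_le_length_mul_sup x (lab e)).trans <|
      mul_le_mul_of_nonneg_right (by exact_mod_cast hlab e) (by positivity)
  have hcycles (es : List E) (hes : IsPrimitiveCycle src tgt es) :
      walkWeight (fun e => wbal x (lab e)) es ≤ 0 :=
    wbal_flatten_map x lab es ▸ hprim es hes
  rw [wbal_flatten_map]
  calc walkWeight (fun e => wbal x (lab e)) π
      ≤ Fintype.card V * (h * (Finset.univ.sup x : ℕ)) :=
        hπ.walkWeight_le_card_mul hcycles hedge (by positivity)
    _ = _ := by push_cast; ring
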